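/- In the two-worker direct mechanism, the strategy profile in which each worker reports E regardless of type is an ex post equilibrium: for every type profile (θ_1, θ_2) ∈ {B,E}², every worker i, and every deviation report r ∈ {B,E}, the payoff of worker i (of type θ_i) when both workers report E is greater than or equal to the payoff when worker i reports r and the opponent reports E. -/
import Mathlib

/-- Worker types: beginner or expert. -/
inductive WorkerType | B | E
deriving DecidableEq

/-- Contracts: salary High/Low paired with task Mixed/Delicate/Perfunctory. -/
inductive Contract | HM | HD | LM | LP
deriving DecidableEq

/-- A worker's payoff from a contract, given the worker's own type. -/
def payoff : Contract → WorkerType → ℝ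
  | .HM, .E => 4
  | .HD, .E => 2
  | .LM, .E => 1
  | .LP, .E => 0
  | .HM, .B => 4
  | .HD, .B => 2
  | .LM, .B => 2
  | .LP, .B => 4

/-- The direct mechanism: a pair of reports ↦ (worker 1's contract, worker 2's contract). -/
def directPair : WorkerType → WorkerType → Contract × Contract
  | .B, .B => (.LM, .LM)
  | .B, .E => (.LP, .HD)
  | .E, .B => (.HD, .LP)
  | .E, .E => (.HM, .HM)

/-- Contract assigned by the direct mechanism to worker `i` under report profile `r`. -/
def directM (r : Fin 2 → WorkerType) (i : Fin 2) : Contract :=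
  if i = 0 then (directPair (r 0) (r 1)).1 else (directPair (r 0) (r 1)).2

/-- In the direct mechanism, the profile in which each worker reports E regardless
of type is an ex post equilibrium. -/
theorem allE_expost_direct :
    ∀ (θ : Fin 2 → WorkerType) (i : Fin 2) (r : WorkerType),
      payoff (directM (fun _ => WorkerType.E) i) (θ i) ≥
        payoff (directM (Function.update (fun _ => WorkerType.E) i r) i) (θ i) := by
  have h : ∀ t, payoff Contract.LP t ≤ payoff Contract.HM t := by
    intro t; cases t <;> norm_num [payoff]
  intro θ i r
  fin_cases i <;> cases r <;>
    simp [directM, directPair, Function.update] <;> apply h
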